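/- Let G be a bi-directed graph, G^min_< the graph constructed by Algorithm 4.2 (dropping arrowheads at simplicial vertices and orienting bi-directed edges by boundary containment and a compatible total order), and G̅ any maximal ancestral graph that is Markov equivalent to G. Then the number of arrowheads of G̅ is at least that of G^min_<, where the number of arrowheads of an ancestral graph with d directed and b bi-directed edges is d + 2b. -/

import Mathlib

/-- Possible edge types between an ordered pair of distinct vertices of a
simple mixed graph.  `arrowTo` at `(v, w)` means `v → w`, `arrowFrom` means
`v ← w`, `undir` means `v − w` and `bidir` means `v ↔ w`. -/
inductive EType : Type
  | none | undir | arrowTo | arrowFrom | bidir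
deriving DecidableEq

/-- The edge type seen from the reversed ordered pair of vertices. -/
def EType.mirror : EType → EType
  | .none => .none
  | .undir => .undir
  | .arrowTo => .arrowFrom
  | .arrowFrom => .arrowTo
  | .bidir => .bidir

/-- A simple mixed graph: at most one edge (undirected, directed or
bi-directed) between any two distinct vertices, and no self loops. -/
structure MixedGraph (V : Type) where
  E : V → V → EType
  no_loop : ∀ v, E v v = .none
  symm : ∀ v w, E w v = (E v w).mirror

/-- `(a, b, c)` are three consecutive vertices on the path `p`. -/
def ConsecTriple {V : Type} (p : List V) (a b c : V) : Prop :=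
  ∃ l1 l2, p = l1 ++ a :: b :: c :: l2

namespace MixedGraph

variable {V : Type} (G : MixedGraph V)

/-- `v − w` is an edge of `G`. -/
def Undir (v w : V) : Prop := G.E v w = .undir

/-- `v → w` is an edge of `G`. -/
def Dir (v w : V) : Prop := G.E v w = .arrowTo

/-- `v ↔ w` is an edge of `G`. -/
def Bidir (v w : V) : Prop := G.E v w = .bidir

/-- `v` and `w` are adjacent (joined by some edge). -/
def Adj (v w : V) : Prop := G.E v w ≠ .none

/-- The edge between `a` and `b` has an arrowhead at `b`. -/
def HeadAt (a b : V) : Prop := G.E a b = .arrowTo ∨ G.E a b = .bidir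

/-- Closed boundary: `v` together with its adjacent vertices. -/
def Bd (v : V) : Set V := insert v {w | G.Adj v w}

/-- A set of vertices is complete if all of its pairs of distinct
vertices are adjacent. -/
def Complete (S : Set V) : Prop := ∀ v ∈ S, ∀ w ∈ S, v ≠ w → G.Adj v w

/-- A vertex is simplicial if its closed boundary is complete. -/
def Simplicial (v : V) : Prop := G.Complete (G.Bd v)

/-- `v` is an ancestor of `w`: `v = w` or there is a directed path from
`v` to `w`. -/
def Anc (v w : V) : Prop := Relation.ReflTransGen G.Dir v w

/-- The set of ancestors of vertices in `C`. -/
def anSet (C : Set V) : Set V := {v | ∃ c ∈ C, G.Anc v c}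

/-- `G` is an ancestral graph. -/
def Ancestral : Prop :=
  (∀ v w, G.Dir v w → ¬ G.Anc w v) ∧
  (∀ v w, G.Undir v w → ∀ u, ¬ G.HeadAt u v) ∧
  (∀ v w, G.Bidir v w → ¬ G.Anc v w)

/-- The boundary containment property. -/
def BdContain : Prop :=
  (∀ v w, G.Undir v w → G.Bd v = G.Bd w) ∧
  (∀ v w, G.Dir v w → G.Bd v ⊆ G.Bd w)

/-- `b` is a collider between consecutive neighbours `a` and `c`. -/
def Collider (a b c : V) : Prop := G.HeadAt a b ∧ G.HeadAt c b

/-- A path: a list of distinct vertices, consecutive ones adjacent. -/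
def IsPath (p : List V) : Prop := p.Nodup ∧ p.Chain' G.Adj

/-- `p` is an m-connecting path given `C`: every non-collider on it is
outside `C` and every collider on it is an ancestor of `C`. -/
def IsMConnPath (C : Set V) (p : List V) : Prop :=
  G.IsPath p ∧
  ∀ a b c, ConsecTriple p a b c →
    (G.Collider a b c → b ∈ G.anSet C) ∧ (¬ G.Collider a b c → b ∉ C)

/-- `v` and `w` are m-connected given `C`. -/
def MConn (v w : V) (C : Set V) : Prop :=
  ∃ p, G.IsMConnPath C p ∧ p.head? = some v ∧ p.getLast? = some w

/-- `v` and `w` are m-separated given `C`. -/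
def MSep (v w : V) (C : Set V) : Prop := ¬ G.MConn v w C

/-- A maximal (ancestral) graph: every pair of distinct non-adjacent
vertices is m-separated given some set. -/
def Maximal : Prop :=
  ∀ v w, v ≠ w → ¬ G.Adj v w → ∃ C : Set V, v ∉ C ∧ w ∉ C ∧ G.MSep v w C

/-- `G` is a bi-directed graph. -/
def Bidirected : Prop := ∀ v w, G.E v w = .none ∨ G.E v w = .bidir

/-- `G` is an undirected graph. -/
def UndirectedG : Prop := ∀ v w, G.E v w = .none ∨ G.E v w = .undir

/-- `G` is a directed acyclic graph. -/
def IsDAG : Prop :=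
  (∀ v w, G.E v w = .none ∨ G.E v w = .arrowTo ∨ G.E v w = .arrowFrom) ∧
  (∀ v w, G.Dir v w → ¬ G.Anc w v)

/-- `G` and `H` have the same skeleton. -/
def SameSkeleton (H : MixedGraph V) : Prop := ∀ v w, G.Adj v w ↔ H.Adj v w

/-- `G` and `H` are Markov equivalent: their m-separation relations
coincide. -/
def MarkovEquiv (H : MixedGraph V) : Prop :=
  ∀ v w (C : Set V), v ≠ w → v ∉ C → w ∉ C → (G.MSep v w C ↔ H.MSep v w C)

open Classical in
/-- The edge map obtained from `G` by dropping all arrowheads at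
simplicial vertices. -/
noncomputable def dropE (v w : V) : EType :=
  match G.E v w with
  | .none => .none
  | .undir => .undir
  | .arrowTo => if G.Simplicial w then .undir else .arrowTo
  | .arrowFrom => if G.Simplicial v then .undir else .arrowFrom
  | .bidir =>
      if G.Simplicial v then (if G.Simplicial w then .undir else .arrowTo)
      else (if G.Simplicial w then .arrowFrom else .bidir)

/-- The graph obtained from `G` by dropping all arrowheads at simplicial
vertices; for a bi-directed graph `G` this is the simplicial graph `Gˢ`. -/
noncomputable def drop : MixedGraph V where
  E := G.dropE
  no_loop v := by simp [dropE, G.no_loop]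
  symm v w := by
    unfold dropE
    rw [G.symm v w]
    cases h : G.E v w <;>
      simp only [EType.mirror] <;> split_ifs <;> simp_all [EType.mirror]

open Classical in
/-- The edge map of the minimally oriented graph `G^min_<`: starting from
the simplicial graph, each bi-directed edge `v ↔ w` with `Bd v ⊆ Bd w`
and `v < w` is replaced by `v → w`. -/
noncomputable def gminE [LinearOrder V] (v w : V) : EType :=
  match G.dropE v w with
  | .bidir =>
      if G.Bd v ⊆ G.Bd w ∧ v < w then .arrowTo
      else if G.Bd w ⊆ G.Bd v ∧ w < v then .arrowFrom
      else .bidir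
  | e => e

/-- The graph `G^min_<` produced by Algorithm 4.2 from `G` and the total
order on `V`. -/
noncomputable def gmin [LinearOrder V] : MixedGraph V where
  E := G.gminE
  no_loop v := by
    have h := G.drop.no_loop v
    simp only [drop] at h
    simp [gminE, h]
  symm v w := by
    have h := G.drop.symm v w
    simp only [drop] at h
    unfold gminE
    rw [h]
    cases hE : G.dropE v w <;> simp only [EType.mirror]
    case bidir =>
      by_cases c1 : G.Bd v ⊆ G.Bd w ∧ v < w
      · have c2 : ¬ (G.Bd w ⊆ G.Bd v ∧ w < v) := fun h' => lt_asymm c1.2 h'.2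
        simp [c1, c2, EType.mirror]
      · by_cases c2 : G.Bd w ⊆ G.Bd v ∧ w < v
        · simp [c1, c2, EType.mirror]
        · simp [c1, c2, EType.mirror]

/-- Total number of arrowheads of `G`: the number of directed edges plus
twice the number of bi-directed edges. -/
noncomputable def arr : ℕ :=
  {p : V × V | G.Dir p.1 p.2}.ncard + {p : V × V | G.Bidir p.1 p.2}.ncard

end MixedGraph

/-- `Gm` is a minimally oriented graph for `G`. -/
def MinOriented {V : Type} (G Gm : MixedGraph V) : Prop :=
  Gm.Ancestral ∧ Gm.Maximal ∧ G.MarkovEquiv Gm ∧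
  ∀ H : MixedGraph V, H.Ancestral → H.Maximal → G.MarkovEquiv H → Gm.arr ≤ H.arr

/-!
Markov equivalence forces `Gb` to have the skeleton of `G`, and since non-adjacent vertices
of the bi-directed graph `G` are m-separated by `∅`, every non-collider `u *-* w *-* v` of `Gb`
has `u` and `v` adjacent. Hence a tail of `Gb` at `w` on an edge `v *-- w` gives
`Bd w ⊆ Bd v`, and a vertex without arrowheads in `Gb` is simplicial. Now compare arrowheads
edge by edge: if `G^min_<` has an arrowhead at `w` on `v *-* w` and `Gb` does not, then `w` is
not simplicial, the order forces `v → w` in `G^min_<`, and ancestrality forces `w → v` in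
`Gb`. So each edge carries at least as many arrowheads in `Gb` as in `G^min_<`.
-/

namespace MixedGraph

variable {V : Type} {G H K : MixedGraph V} {u v w : V}

lemma mirror_eq_none_iff {e : EType} : e.mirror = .none ↔ e = .none := by
  cases e <;> simp [EType.mirror]

lemma Adj.ne (h : G.Adj v w) : v ≠ w := by
  rintro rfl
  exact h (G.no_loop v)

lemma Adj.symm (h : G.Adj v w) : G.Adj w v := by
  rw [Adj, G.symm, Ne, mirror_eq_none_iff]
  exact h

lemma HeadAt.adj (h : G.HeadAt v w) : G.Adj v w := by
  rcases h with h | h <;> simp [Adj, h]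

lemma Dir.not_headAt_symm (h : G.Dir v w) : ¬ G.HeadAt w v := by
  have hE : G.E v w = .arrowTo := h
  simp [HeadAt, G.symm v w, hE, EType.mirror]

lemma Simplicial.of_bd_subset (hv : G.Simplicial v) (h : G.Bd w ⊆ G.Bd v) :
    G.Simplicial w :=
  fun a ha b hb hab => hv a (h ha) b (h hb) hab

lemma arr_eq_ncard_headAt [Finite V] (H : MixedGraph V) :
    H.arr = {p : V × V | H.HeadAt p.1 p.2}.ncard := by
  have hdisj : Disjoint {p : V × V | H.Dir p.1 p.2} {p : V × V | H.Bidir p.1 p.2} :=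
    Set.disjoint_left.2 fun p (h1 : H.E _ _ = _) (h2 : H.E _ _ = _) => by simp [h1] at h2
  rw [arr, ← Set.ncard_union_eq hdisj (Set.toFinite _) (Set.toFinite _)]
  rfl

lemma arr_le_arr_of_headAt [Finite V]
    (h : ∀ v w, H.HeadAt v w → ¬ K.HeadAt v w → ¬ H.HeadAt w v ∧ K.HeadAt w v) :
    H.arr ≤ K.arr := by
  classical
  rw [arr_eq_ncard_headAt, arr_eq_ncard_headAt]
  -- an arrowhead of `H` goes to itself if `K` has it, else to the other end of its edge
  refine Set.ncard_le_ncard_of_injOn (fun p => if K.HeadAt p.1 p.2 then p else p.swap) ?_ ?_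
  · rintro ⟨a, b⟩ (hp : H.HeadAt a b)
    by_cases hK : K.HeadAt a b
    · simp [hK]
    · simpa [hK] using (h a b hp hK).2
  · rintro ⟨a, b⟩ (hp : H.HeadAt a b) ⟨c, d⟩ (hq : H.HeadAt c d) hpq
    by_cases hab : K.HeadAt a b <;> by_cases hcd : K.HeadAt c d <;>
      simp only [hab, hcd, if_true, if_false, Prod.swap_prod_mk, Prod.mk.injEq] at hpq
    · simp [hpq]
    · exact absurd (hpq.1 ▸ hpq.2 ▸ hp) (h c d hq hcd).1
    · exact absurd (hpq.1 ▸ hpq.2 ▸ hq) (h a b hp hab).1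
    · simp [hpq]

lemma Ancestral.dir_of_not_headAt (hH : H.Ancestral) (hadj : H.Adj v w)
    (htail : ¬ H.HeadAt v w) (hhead : H.HeadAt u w) : H.Dir w v := by
  have hvw : H.Undir w v ∨ H.Dir w v := by
    simp only [Undir, Dir, H.symm v w]
    cases hE : H.E v w <;> simp_all [HeadAt, Adj, EType.mirror]
  exact hvw.resolve_left fun hu => hH.2.1 w v hu u hhead

lemma mconn_of_adj (h : G.Adj v w) (C : Set V) : G.MConn v w C := by
  refine ⟨[v, w], ⟨⟨by simp [h.ne], (.cons_cons h (.singleton w))⟩, ?_⟩, rfl, rfl⟩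
  rintro a b c ⟨l1, l2, hp⟩
  have := congrArg List.length hp
  simp at this
  omega

lemma mconn_of_not_collider (hvb : G.Adj v w) (hbu : G.Adj w u) (hvu : v ≠ u)
    (hnc : ¬ G.Collider v w u) : G.MConn v u ∅ := by
  refine ⟨[v, w, u], ⟨⟨by simp [hvb.ne, hbu.ne, hvu],
    .cons_cons hvb (.cons_cons hbu (.singleton u))⟩, ?_⟩, rfl, rfl⟩
  rintro a b c ⟨l1, l2, hp⟩
  have := congrArg List.length hp
  simp at this
  obtain rfl : l1 = [] := List.eq_nil_of_length_eq_zero (by omega)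
  obtain ⟨rfl, rfl, rfl, -⟩ : v = a ∧ w = b ∧ u = c ∧ l2 = [] := by simpa using hp
  exact ⟨fun hc => absurd hc hnc, fun _ => id⟩

/-- In a bi-directed graph every inner vertex of a path is a collider, and no collider is an
ancestor of `∅`. -/
lemma Bidirected.msep_empty (hG : G.Bidirected) (hne : v ≠ w) (hna : ¬ G.Adj v w) :
    G.MSep v w ∅ := by
  rintro ⟨p, ⟨⟨-, hch⟩, htr⟩, hh, hl⟩
  match p, hh, hl, hch with
  | [x], hh, hl, _ => simp_all
  | [x, y], hh, hl, hch =>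
    simp only [List.head?_cons, List.getLast?_cons_cons, List.getLast?_singleton,
      Option.some.injEq] at hh hl
    exact hna (hh ▸ hl ▸ (List.isChain_cons_cons.1 hch).1)
  | x :: y :: z :: t, _, _, hch =>
    obtain ⟨hxy, hyz⟩ := List.isChain_cons_cons.1 hch
    have hcol : G.Collider x y z := ⟨.inr ((hG x y).resolve_left hxy),
      .inr ((hG z y).resolve_left (List.isChain_cons_cons.1 hyz).1.symm)⟩
    obtain ⟨c, hc, -⟩ := (htr x y z ⟨[], t, rfl⟩).1 hcol
    exact hc

section MarkovEquiv

variable (hG : G.Bidirected) (h3 : G.MarkovEquiv H)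
include hG h3

lemma Bidirected.sameSkeleton (hmax : H.Maximal) : G.SameSkeleton H := by
  refine fun v w => ⟨fun h => ?_, fun h => ?_⟩ <;> by_contra hn
  · obtain ⟨C, hv, hw, hsep⟩ := hmax v w h.ne hn
    exact (h3 v w C h.ne hv hw).2 hsep (G.mconn_of_adj h C)
  · exact (h3 v w ∅ h.ne (by simp) (by simp)).1 (hG.msep_empty h.ne hn) (H.mconn_of_adj h ∅)

lemma Bidirected.adj_of_not_collider (hsk : G.SameSkeleton H) (huw : G.Adj u w)
    (hwv : G.Adj w v) (huv : u ≠ v) (hnc : ¬ H.Collider u w v) : G.Adj u v := by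
  by_contra hn
  exact (h3 u v ∅ huv (by simp) (by simp)).1 (hG.msep_empty huv hn)
    (mconn_of_not_collider ((hsk u w).1 huw) ((hsk w v).1 hwv) huv hnc)

lemma Bidirected.bd_subset_of_not_headAt (hsk : G.SameSkeleton H) (hadj : G.Adj v w)
    (htail : ¬ H.HeadAt v w) : G.Bd w ⊆ G.Bd v := by
  rintro u (rfl | hu)
  · exact .inr hadj
  · by_cases huv : u = v
    · exact .inl huv
    · exact .inr (hG.adj_of_not_collider h3 hsk hu.symm hadj.symm huv fun h => htail h.2).symm

lemma Bidirected.simplicial_of_forall_not_headAt (hsk : G.SameSkeleton H)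
    (hnh : ∀ u, ¬ H.HeadAt u w) : G.Simplicial w := by
  rintro a (rfl | ha) b (rfl | hb) hab
  · exact absurd rfl hab
  · exact hb
  · exact ha.symm
  · exact hG.adj_of_not_collider h3 hsk ha.symm hb hab fun h => hnh a h.1

end MarkovEquiv

lemma gmin_adj_iff [LinearOrder V] : G.gmin.Adj v w ↔ G.Adj v w := by
  change G.gminE v w ≠ .none ↔ G.E v w ≠ .none
  unfold gminE dropE
  cases G.E v w <;> simp only [] <;> split_ifs <;> simp

/-- On an edge of `G^min_<` with an arrowhead at `w`, the containment `Bd w ⊆ Bd v` can only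
come from `Bd v = Bd w` with `v < w`, which orients the edge as `v → w`. -/
lemma Bidirected.gmin_dir_of_headAt [LinearOrder V] (hG : G.Bidirected)
    (hord : ∀ v w : V, G.Bd v ⊂ G.Bd w → v < w) (hh : G.gmin.HeadAt v w)
    (hsub : G.Bd w ⊆ G.Bd v) : G.gmin.Dir v w ∧ ¬ G.Simplicial w := by
  have hadj : G.Adj v w := gmin_adj_iff.1 hh.adj
  have hE : G.E v w = .bidir := (hG v w).resolve_left hadj
  have hsw : ¬ G.Simplicial w := by
    intro hsw
    revert hh
    simp only [HeadAt, gmin, gminE, dropE, hE]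
    split_ifs <;> simp
  have hsv : ¬ G.Simplicial v := fun hsv => hsw (hsv.of_bd_subset hsub)
  have hdrop : G.dropE v w = .bidir := by simp [dropE, hE, hsv, hsw]
  have horient : G.Bd v ⊆ G.Bd w ∧ v < w := by
    by_contra hno
    have hwv : w < v := by
      by_cases hvw : G.Bd v ⊆ G.Bd w
      · exact lt_of_le_of_ne (not_lt.1 fun h => hno ⟨hvw, h⟩) hadj.ne.symm
      · exact hord w v (hsub.ssubset_of_not_superset hvw)
    revert hh
    simp [HeadAt, gmin, gminE, hdrop, hno, hsub, hwv]
  exact ⟨by simp [Dir, gmin, gminE, hdrop, horient], hsw⟩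

end MixedGraph

/-- Any maximal ancestral graph Markov equivalent to a
bi-directed graph `G` has at least as many arrowheads as the graph
`G^min_<` constructed by Algorithm 4.2. -/
theorem stmt13 {V : Type} [Finite V] [LinearOrder V] (G : MixedGraph V)
    (hG : G.Bidirected) (hord : ∀ v w : V, G.Bd v ⊂ G.Bd w → v < w)
    (Gb : MixedGraph V) (h1 : Gb.Ancestral) (h2 : Gb.Maximal)
    (h3 : G.MarkovEquiv Gb) :
    (G.gmin).arr ≤ Gb.arr := by
  have hsk : G.SameSkeleton Gb := hG.sameSkeleton h3 h2
  refine MixedGraph.arr_le_arr_of_headAt fun v w hh htail => ?_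
  have hadj : G.Adj v w := MixedGraph.gmin_adj_iff.1 hh.adj
  obtain ⟨hdir, hsw⟩ :=
    hG.gmin_dir_of_headAt hord hh (hG.bd_subset_of_not_headAt h3 hsk hadj htail)
  obtain ⟨u, hu⟩ : ∃ u, Gb.HeadAt u w := by
    by_contra! hnh
    exact hsw (hG.simplicial_of_forall_not_headAt h3 hsk hnh)
  exact ⟨hdir.not_headAt_symm, .inl (h1.dir_of_not_headAt ((hsk v w).1 hadj) htail hu)⟩
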